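/- (Corollary, tail order.) Suppose ω(x) = x, f is strictly positive, bounded above by M = f(0) < ∞ and nonincreasing on [0,∞), g is strictly positive, bounded and nonincreasing on [0,∞), and ∫_0^∞ u g(u) du < ∞. Then for all α, β > 0 the right tail of the BTV(α,β) prior is of exact order |λ|^{−β−1}: there exist constants 0 < c ≤ C and Λ > 0 such that for all λ ≥ Λ, c·λ^{−β−1} ≤ π_{α,β}(λ) ≤ C·λ^{−β−1}. By symmetry of M_TV, the left tail is of order |λ|^{−α−1}. -/

import Mathlib

open MeasureTheory Real

/-- The perturbation measure for ω(x) = x: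
M_TV(λ) = sign(λ) · (1/2) ∫ |2G(λx) − 1| f(x) dx. -/
noncomputable def MTVid (f G : ℝ → ℝ) (l : ℝ) : ℝ :=
  Real.sign l * ((1 / 2) * ∫ x, |2 * G (l * x) - 1| * f x)

/-- The BTV(α,β) prior density for ω(x) = x. -/
noncomputable def btvPriorId (f g G : ℝ → ℝ) (α β : ℝ) (l : ℝ) : ℝ :=
  (Real.Gamma (α + β) / (Real.Gamma α * Real.Gamma β)) *
    (MTVid f G l + 1 / 2) ^ (α - 1) * (1 / 2 - MTVid f G l) ^ (β - 1) *
    (2 * ∫ x in Set.Ioi (0 : ℝ), x * f x * g (l * x))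

/-!
Write `Ḡ t = ∫_{(t,∞)} g` for the upper tail of `g`. For `λ > 0`, evenness of `g` gives
`|2 G(λx) - 1| = 1 - 2 Ḡ(λ|x|)`, so `M_TV(λ) = 1/2 - D(λ)` with
`D(λ) = ∫ Ḡ(λ|x|) f(x) dx`. By the layer-cake formula `∫_0^∞ Ḡ = ∫_0^∞ u g(u) du < ∞`, so
rescaling `x ↦ λx` gives `D(λ) ≍ 1/λ`: the upper bound from `f ≤ M`, the lower bound from
restricting to `(0, 1/λ]`, where `Ḡ(λx) ≥ Ḡ(1)` and `f(x) ≥ f(1)`. In the same way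
`∫_0^∞ x f(x) g(λx) dx ≍ λ⁻²`. Finally `D → 0` makes `(M_TV + 1/2)^(α-1) = (1 - D)^(α-1)`
tend to `1`, so the prior is `≍ D^(β-1) λ⁻² ≍ λ^(-β-1)`.
-/
open Filter Topology Asymptotics Set

noncomputable def upperTail (g : ℝ → ℝ) (t : ℝ) : ℝ := ∫ u in Ioi t, g u

section UpperTail

variable {g : ℝ → ℝ}

lemma upperTail_nonneg (hg0 : ∀ t, 0 ≤ g t) (t : ℝ) : 0 ≤ upperTail g t :=
  setIntegral_nonneg measurableSet_Ioi fun u _ => hg0 u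

lemma upperTail_antitone (hg0 : ∀ t, 0 ≤ g t) (hg : Integrable g) : Antitone (upperTail g) :=
  fun _ _ hst => setIntegral_mono_set hg.integrableOn (ae_of_all _ fun u => hg0 u)
    (Ioi_subset_Ioi hst).eventuallyLE

lemma upperTail_pos (hg_pos : ∀ t, 0 < g t) (hg : Integrable g) (t : ℝ) :
    0 < upperTail g t := by
  rw [upperTail, setIntegral_pos_iff_support_of_nonneg_ae (ae_of_all _ fun u => (hg_pos u).le)
    hg.integrableOn, Function.support_eq_univ fun u => (hg_pos u).ne', univ_inter,
    Real.volume_Ioi]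
  exact ENNReal.zero_lt_top

lemma integral_Iic_add_upperTail (hg : Integrable g) (t : ℝ) :
    (∫ u in Iic t, g u) + upperTail g t = ∫ u, g u :=
  intervalIntegral.integral_Iic_add_Ioi hg.integrableOn hg.integrableOn

lemma integral_Iic_neg_eq_upperTail (hg_even : ∀ t, g (-t) = g t) (t : ℝ) :
    ∫ u in Iic (-t), g u = upperTail g t := by
  simpa only [hg_even, neg_neg, upperTail] using integral_comp_neg_Iic (-t) g

lemma lintegral_upperTail (hg_meas : Measurable g) (hg0 : ∀ t, 0 ≤ g t)
    (hg : Integrable g) :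
    ∫⁻ t in Ioi 0, ENNReal.ofReal (upperTail g t) = ∫⁻ u in Ioi 0, ENNReal.ofReal (u * g u) := by
  set μ := (volume.restrict (Ioi (0:ℝ))).withDensity fun u => ENNReal.ofReal (g u)
  have hpos : ∀ᵐ u ∂μ, 0 < u := withDensity_absolutelyContinuous _ _ <|
    (ae_restrict_iff' measurableSet_Ioi).2 (ae_of_all _ fun _ hu => hu)
  have hlayer := lintegral_eq_lintegral_meas_lt μ (f := id) (hpos.mono fun _ hu => hu.le)
    measurable_id.aemeasurable
  rw [lintegral_withDensity_eq_lintegral_mul _ hg_meas.ennreal_ofReal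
    measurable_id.ennreal_ofReal] at hlayer
  refine (setLIntegral_congr_fun measurableSet_Ioi fun t ht => ?_).trans
    (hlayer.symm.trans (setLIntegral_congr_fun measurableSet_Ioi fun u hu => ?_))
  · change _ = μ (Ioi t)
    rw [withDensity_apply _ measurableSet_Ioi, Measure.restrict_restrict measurableSet_Ioi,
      Ioi_inter_Ioi, sup_eq_left.2 (le_of_lt ht), upperTail,
      ofReal_integral_eq_lintegral_ofReal hg.integrableOn (ae_of_all _ hg0)]
  · simp [ENNReal.ofReal_mul (le_of_lt hu), mul_comm]

lemma integrableOn_upperTail_and_integral_eq (hg_meas : Measurable g) (hg0 : ∀ t, 0 ≤ g t)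
    (hg : Integrable g) (hug : IntegrableOn (fun u => u * g u) (Ioi 0)) :
    IntegrableOn (upperTail g) (Ioi 0) ∧
      ∫ t in Ioi 0, upperTail g t = ∫ u in Ioi 0, u * g u := by
  have hmeas : AEStronglyMeasurable (upperTail g) (volume.restrict (Ioi 0)) :=
    (upperTail_antitone hg0 hg).measurable.aestronglyMeasurable
  have hnn : 0 ≤ᵐ[volume.restrict (Ioi (0:ℝ))] upperTail g := ae_of_all _ (upperTail_nonneg hg0)
  have hug_nn : 0 ≤ᵐ[volume.restrict (Ioi (0:ℝ))] fun u => u * g u :=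
    (ae_restrict_iff' measurableSet_Ioi).2
      (ae_of_all _ fun u hu => mul_nonneg (le_of_lt hu) (hg0 u))
  have hlin := lintegral_upperTail hg_meas hg0 hg
  rw [← ofReal_integral_eq_lintegral_ofReal hug hug_nn] at hlin
  refine ⟨⟨hmeas, ?_⟩, ?_⟩
  · rw [hasFiniteIntegral_iff_ofReal hnn, hlin]
    exact ENNReal.ofReal_lt_top
  · rw [integral_eq_lintegral_of_nonneg_ae hnn hmeas, hlin,
      ENNReal.toReal_ofReal (integral_nonneg_of_ae hug_nn)]

variable (hg0 : ∀ t, 0 ≤ g t) (hg : Integrable g) (hg_one : ∫ t, g t = 1)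
  (hg_even : ∀ t, g (-t) = g t)
include hg hg_one hg_even

lemma upperTail_zero : upperTail g 0 = 1 / 2 := by
  have h := integral_Iic_add_upperTail hg 0
  rw [← neg_zero, integral_Iic_neg_eq_upperTail hg_even, neg_zero, hg_one] at h
  linarith

include hg0 in
lemma upperTail_le_half {t : ℝ} (ht : 0 ≤ t) : upperTail g t ≤ 1 / 2 :=
  upperTail_zero hg hg_one hg_even ▸ upperTail_antitone hg0 hg ht

include hg0 in
lemma abs_two_mul_integral_Iic_sub_one (t : ℝ) :
    |2 * (∫ u in Iic t, g u) - 1| = 1 - 2 * upperTail g |t| := by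
  have hhalf := upperTail_le_half hg0 hg hg_one hg_even (abs_nonneg t)
  rcases le_or_gt 0 t with ht | ht
  · have h := integral_Iic_add_upperTail hg t
    rw [hg_one] at h
    rw [abs_of_nonneg ht] at hhalf ⊢
    rw [abs_of_nonneg (by linarith)]
    linarith
  · rw [abs_of_neg ht, ← integral_Iic_neg_eq_upperTail hg_even, neg_neg] at hhalf ⊢
    rw [abs_of_nonpos (by linarith)]
    ring

end UpperTail

lemma mul_sub_le_setIntegral {φ : ℝ → ℝ} {s : Set ℝ} {a b c : ℝ} (hs : MeasurableSet s)
    (hφ : IntegrableOn φ s) (hφ0 : ∀ x ∈ s, 0 ≤ φ x) (hab : a ≤ b) (hsub : Ioc a b ⊆ s)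
    (hc : ∀ x ∈ Ioc a b, c ≤ φ x) : c * (b - a) ≤ ∫ x in s, φ x :=
  calc c * (b - a) = c * volume.real (Ioc a b) := by
        rw [Real.volume_real_Ioc_of_le hab]
    _ ≤ ∫ x in Ioc a b, φ x :=
        setIntegral_ge_of_const_le_real measurableSet_Ioc measure_Ioc_lt_top.ne hc
          (hφ.mono_set hsub)
    _ ≤ ∫ x in s, φ x :=
        setIntegral_mono_set hφ ((ae_restrict_iff' hs).2 (ae_of_all _ hφ0)) hsub.eventuallyLE

lemma isTheta_of_le_of_le {α : Type*} {l : Filter α} {F u : α → ℝ} {c C : ℝ} (hc : 0 < c)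
    (hu : ∀ᶠ x in l, 0 ≤ u x) (hlo : ∀ᶠ x in l, c * u x ≤ F x)
    (hhi : ∀ᶠ x in l, F x ≤ C * u x) : F =Θ[l] u := by
  refine ⟨IsBigO.of_bound C ?_, IsBigO.of_bound c⁻¹ ?_⟩
  · filter_upwards [hu, hlo, hhi] with x hux hlox hhix
    rw [Real.norm_of_nonneg hux, Real.norm_of_nonneg (by nlinarith)]
    exact hhix
  · filter_upwards [hu, hlo] with x hux hlox
    rw [Real.norm_of_nonneg hux, Real.norm_of_nonneg (by nlinarith), inv_mul_eq_div,
      le_div_iff₀' hc]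
    exact hlox

lemma exists_le_of_isTheta_atTop {F u : ℝ → ℝ} (h : F =Θ[atTop] u)
    (hF : ∀ᶠ x in atTop, 0 ≤ F x) (hu : ∀ᶠ x in atTop, 0 ≤ u x) :
    ∃ c C Λ : ℝ, 0 < c ∧ c ≤ C ∧ 0 < Λ ∧
      ∀ x, Λ ≤ x → c * u x ≤ F x ∧ F x ≤ C * u x := by
  obtain ⟨C, -, hC⟩ := h.1.exists_pos
  obtain ⟨c', hc', hc'_bound⟩ := h.2.exists_pos
  obtain ⟨Λ, hΛ⟩ := eventually_atTop.1 (hF.and (hu.and (hC.bound.and hc'_bound.bound)))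
  refine ⟨c'⁻¹, max C c'⁻¹, max Λ 1, inv_pos.2 hc', le_max_right _ _,
    lt_max_of_lt_right one_pos, fun x hx => ?_⟩
  obtain ⟨hFx, hux, hhi, hlo⟩ := hΛ x (le_of_max_le_left hx)
  rw [Real.norm_of_nonneg hux, Real.norm_of_nonneg hFx] at hhi hlo
  constructor
  · rw [inv_mul_eq_div, div_le_iff₀' hc']
    exact hlo
  · exact hhi.trans (mul_le_mul_of_nonneg_right (le_max_left _ _) hux)

lemma isTheta_betaPrior_shape {D A : ℝ → ℝ} {Q α β : ℝ} (hQ : Q ≠ 0)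
    (hD : D =Θ[atTop] fun l => l ^ (-1 : ℝ)) (hD_nonneg : ∀ l, 0 ≤ D l)
    (hA : A =Θ[atTop] fun l => l ^ (-2 : ℝ)) :
    (fun l => Q * (1 - D l) ^ (α - 1) * D l ^ (β - 1) * (2 * A l)) =Θ[atTop]
      fun l => l ^ (-β - 1) := by
  have hpos : ∀ᶠ l : ℝ in atTop, 0 < l := eventually_gt_atTop 0
  have hD0 : Tendsto D atTop (𝓝 0) :=
    hD.isBigO.trans_tendsto (by simpa using tendsto_rpow_neg_atTop one_pos)
  have h1D : (fun l => (1 - D l) ^ (α - 1)) =Θ[atTop] fun _ => (1 : ℝ) := by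
    have h : Tendsto (fun l => (1 - D l) ^ (α - 1)) atTop (𝓝 1) := by
      simpa using
        ((tendsto_const_nhds (x := (1 : ℝ))).sub hD0).rpow_const (Or.inl (by norm_num))
    exact (isTheta_of_div_tendsto_nhds_ne_zero (f := fun _ => (1 : ℝ)) (by simpa using h)
      one_ne_zero).symm
  have hDβ := hD.rpow (r := β - 1) (Eventually.of_forall hD_nonneg)
    (hpos.mono fun l hl => (Real.rpow_pos_of_pos hl _).le)
  refine ((((isTheta_const_mul_left hQ).2 h1D).mul hDβ).mul
    ((isTheta_const_mul_left two_ne_zero).2 hA)).trans_eventuallyEq ?_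
  filter_upwards [hpos] with l hl
  rw [one_mul, ← Real.rpow_mul hl.le, ← Real.rpow_add hl]
  ring_nf

noncomputable def mtvDefect (f g : ℝ → ℝ) (l : ℝ) : ℝ := ∫ x, upperTail g (l * |x|) * f x

section Defect

variable {f g : ℝ → ℝ} {l : ℝ}

lemma mtvDefect_eq_two_mul_integral_Ioi (hf_even : ∀ x, f (-x) = f x) (l : ℝ) :
    mtvDefect f g l = 2 * ∫ x in Ioi 0, upperTail g (l * x) * f x := by
  have hf_abs : ∀ x, f |x| = f x := fun x => by
    rcases abs_choice x with h | h <;> simp only [h, hf_even]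
  simp only [mtvDefect, ← integral_comp_abs (f := fun y => upperTail g (l * y) * f y), hf_abs]

lemma integrable_upperTail_comp_mul {φ : ℝ → ℝ} (hf : Integrable f) (hg0 : ∀ t, 0 ≤ g t)
    (hg : Integrable g) (hφ : Measurable φ) : Integrable fun x => upperTail g (φ x) * f x :=
  hf.bdd_mul (c := ∫ u, g u)
    ((upperTail_antitone hg0 hg).measurable.comp hφ).aestronglyMeasurable
    (ae_of_all _ fun x => by
      rw [Real.norm_of_nonneg (upperTail_nonneg hg0 _)]
      exact setIntegral_le_integral hg (ae_of_all _ hg0))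

lemma MTVid_eq_half_sub_mtvDefect {G : ℝ → ℝ} (hf : Integrable f) (hf_one : ∫ x, f x = 1)
    (hg0 : ∀ t, 0 ≤ g t) (hg : Integrable g) (hg_one : ∫ t, g t = 1)
    (hg_even : ∀ t, g (-t) = g t) (hG : ∀ t, G t = ∫ u in Iic t, g u) (hl : 0 < l) :
    MTVid f G l = 1 / 2 - mtvDefect f g l := by
  have hintegrand : (fun x => |2 * G (l * x) - 1| * f x)
      = fun x => f x - 2 * (upperTail g (l * |x|) * f x) := funext fun x => by
    rw [hG, abs_two_mul_integral_Iic_sub_one hg0 hg hg_one hg_even, abs_mul, abs_of_pos hl]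
    ring
  rw [MTVid, Real.sign_of_pos hl, hintegrand, integral_sub hf
    ((integrable_upperTail_comp_mul hf hg0 hg (measurable_abs.const_mul l)).const_mul 2),
    integral_const_mul, hf_one, mtvDefect]
  ring

lemma mtvDefect_nonneg (hf0 : ∀ x, 0 ≤ f x) (hg0 : ∀ t, 0 ≤ g t) (l : ℝ) :
    0 ≤ mtvDefect f g l :=
  integral_nonneg fun x => mul_nonneg (upperTail_nonneg hg0 _) (hf0 x)

lemma mtvDefect_le_half (hf : Integrable f) (hf_pos : ∀ x, 0 < f x)
    (hf_one : ∫ x, f x = 1) (hg0 : ∀ t, 0 ≤ g t) (hg : Integrable g) (hg_one : ∫ t, g t = 1)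
    (hg_even : ∀ t, g (-t) = g t) (hl : 0 ≤ l) : mtvDefect f g l ≤ 1 / 2 := by
  have h := integral_mono (integrable_upperTail_comp_mul hf hg0 hg
      (measurable_abs.const_mul l)) (hf.const_mul (1 / 2)) fun x =>
    mul_le_mul_of_nonneg_right (upperTail_le_half hg0 hg hg_one hg_even (by positivity))
      (hf_pos x).le
  rwa [integral_const_mul, hf_one, mul_one] at h

lemma le_mtvDefect (hf : Integrable f) (hf_pos : ∀ x, 0 < f x) (hf_even : ∀ x, f (-x) = f x)
    (hf_anti : AntitoneOn f (Ici 0)) (hg0 : ∀ t, 0 ≤ g t) (hg : Integrable g) (hl : 1 ≤ l) :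
    2 * (upperTail g 1 * f 1) * l⁻¹ ≤ mtvDefect f g l := by
  have hl0 : 0 < l := one_pos.trans_le hl
  rw [mtvDefect_eq_two_mul_integral_Ioi hf_even, mul_assoc]
  refine mul_le_mul_of_nonneg_left ?_ two_pos.le
  have h := mul_sub_le_setIntegral measurableSet_Ioi
    (integrable_upperTail_comp_mul hf hg0 hg (measurable_const_mul l)).integrableOn
    (fun x _ => mul_nonneg (upperTail_nonneg hg0 _) (hf_pos x).le) (inv_nonneg.2 hl0.le)
    Ioc_subset_Ioi_self (c := upperTail g 1 * f 1) fun x hx => ?_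
  · simpa using h
  · have hlx : l * x ≤ 1 := by
      calc l * x ≤ l * l⁻¹ := mul_le_mul_of_nonneg_left hx.2 hl0.le
        _ = 1 := mul_inv_cancel₀ hl0.ne'
    exact mul_le_mul (upperTail_antitone hg0 hg hlx)
      (hf_anti hx.1.le (mem_Ici.2 zero_le_one) (hx.2.trans (inv_le_one_of_one_le₀ hl)))
      (hf_pos 1).le (upperTail_nonneg hg0 _)

lemma mtvDefect_le {M : ℝ} (hf_pos : ∀ x, 0 < f x) (hf_even : ∀ x, f (-x) = f x)
    (hf_bdd : ∀ x, f x ≤ M) (hg_meas : Measurable g) (hg0 : ∀ t, 0 ≤ g t) (hg : Integrable g)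
    (hug : IntegrableOn (fun u => u * g u) (Ioi 0)) (hl : 0 < l) :
    mtvDefect f g l ≤ 2 * (M * ∫ u in Ioi 0, u * g u) * l⁻¹ := by
  obtain ⟨hGi, hGK⟩ := integrableOn_upperTail_and_integral_eq hg_meas hg0 hg hug
  have hscaled : IntegrableOn (fun x => upperTail g (l * x)) (Ioi 0) := by
    rw [integrableOn_Ioi_comp_mul_left_iff _ _ hl, mul_zero]
    exact hGi
  rw [mtvDefect_eq_two_mul_integral_Ioi hf_even, mul_assoc, mul_assoc]
  refine mul_le_mul_of_nonneg_left ?_ two_pos.le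
  calc ∫ x in Ioi 0, upperTail g (l * x) * f x
      ≤ ∫ x in Ioi 0, M * upperTail g (l * x) :=
        integral_mono_of_nonneg (ae_of_all _ fun x => mul_nonneg (upperTail_nonneg hg0 _)
          (hf_pos x).le) (hscaled.const_mul M) (ae_of_all _ fun x => by
            simpa only [mul_comm M] using
              mul_le_mul_of_nonneg_left (hf_bdd x) (upperTail_nonneg hg0 (l * x)))
    _ = M * ((∫ u in Ioi 0, u * g u) * l⁻¹) := by
        rw [integral_const_mul, integral_comp_mul_left_Ioi _ _ hl, mul_zero, hGK, smul_eq_mul,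
          mul_comm l⁻¹]

lemma mtvDefect_isTheta {M : ℝ} (hf : Integrable f) (hf_pos : ∀ x, 0 < f x)
    (hf_even : ∀ x, f (-x) = f x) (hf_bdd : ∀ x, f x ≤ M) (hf_anti : AntitoneOn f (Ici 0))
    (hg_meas : Measurable g) (hg_pos : ∀ t, 0 < g t) (hg : Integrable g)
    (hug : IntegrableOn (fun u => u * g u) (Ioi 0)) :
    mtvDefect f g =Θ[atTop] fun l => l ^ (-1 : ℝ) := by
  have hg0 : ∀ t, 0 ≤ g t := fun t => (hg_pos t).le
  have hlo : ∀ᶠ l in atTop, 2 * (upperTail g 1 * f 1) * l ^ (-1 : ℝ) ≤ mtvDefect f g l := by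
    filter_upwards [eventually_ge_atTop 1] with l hl
    simpa only [Real.rpow_neg_one] using le_mtvDefect hf hf_pos hf_even hf_anti hg0 hg hl
  have hhi : ∀ᶠ l in atTop,
      mtvDefect f g l ≤ 2 * (M * ∫ u in Ioi 0, u * g u) * l ^ (-1 : ℝ) := by
    filter_upwards [eventually_gt_atTop 0] with l hl
    simpa only [Real.rpow_neg_one] using
      mtvDefect_le hf_pos hf_even hf_bdd hg_meas hg0 hg hug hl
  exact isTheta_of_le_of_le (mul_pos two_pos (mul_pos (upperTail_pos hg_pos hg 1) (hf_pos 1)))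
    ((eventually_gt_atTop 0).mono fun l hl => (Real.rpow_pos_of_pos hl _).le) hlo hhi

end Defect

section FirstMoment

variable {f g : ℝ → ℝ} {l : ℝ}

lemma integrableOn_and_integral_mul_comp_mul (hug : IntegrableOn (fun u => u * g u) (Ioi 0))
    (hl : 0 < l) :
    IntegrableOn (fun x => x * g (l * x)) (Ioi 0) ∧
      ∫ x in Ioi 0, x * g (l * x) = (∫ u in Ioi 0, u * g u) * (l ^ 2)⁻¹ := by
  have hrescale : (fun x => x * g (l * x)) = fun x => l⁻¹ * ((l * x) * g (l * x)) :=
    funext fun x => by field_simp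
  have hscaled := (integrableOn_Ioi_comp_mul_left_iff (fun u => u * g u) 0 hl).2
    (by rwa [mul_zero])
  refine ⟨hrescale ▸ hscaled.const_mul l⁻¹, ?_⟩
  rw [hrescale, integral_const_mul, integral_comp_mul_left_Ioi (fun u => u * g u) 0 hl, mul_zero,
    smul_eq_mul]
  ring

variable {M : ℝ}

lemma mul_mul_comp_mul_le (hf_bdd : ∀ x, f x ≤ M) (hg_pos : ∀ t, 0 < g t) {x : ℝ} (hx : 0 < x) :
    x * f x * g (l * x) ≤ M * (x * g (l * x)) := by
  calc x * f x * g (l * x) = f x * (x * g (l * x)) := by ring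
    _ ≤ M * (x * g (l * x)) :=
        mul_le_mul_of_nonneg_right (hf_bdd x) (mul_nonneg hx.le (hg_pos _).le)

lemma integrableOn_mul_mul_comp_mul (hf_pos : ∀ x, 0 < f x) (hf_bdd : ∀ x, f x ≤ M)
    (hg_pos : ∀ t, 0 < g t) (hf : AEStronglyMeasurable f) (hg_meas : Measurable g)
    (hug : IntegrableOn (fun u => u * g u) (Ioi 0)) (hl : 0 < l) :
    IntegrableOn (fun x => x * f x * g (l * x)) (Ioi 0) :=
  ((integrableOn_and_integral_mul_comp_mul hug hl).1.const_mul M).mono'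
    ((continuous_id.aestronglyMeasurable.mul hf).mul
      (hg_meas.comp (measurable_const_mul l)).aestronglyMeasurable).restrict
    ((ae_restrict_iff' measurableSet_Ioi).2 (ae_of_all _ fun x (hx : 0 < x) => by
      rw [Real.norm_of_nonneg (by have := hf_pos x; have := hg_pos (l * x); positivity)]
      exact mul_mul_comp_mul_le hf_bdd hg_pos hx))

lemma integral_mul_mul_comp_mul_le (hf_pos : ∀ x, 0 < f x) (hf_bdd : ∀ x, f x ≤ M)
    (hg_pos : ∀ t, 0 < g t) (hug : IntegrableOn (fun u => u * g u) (Ioi 0)) (hl : 0 < l) :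
    ∫ x in Ioi 0, x * f x * g (l * x) ≤ M * (∫ u in Ioi 0, u * g u) * (l ^ 2)⁻¹ := by
  obtain ⟨hint, hval⟩ := integrableOn_and_integral_mul_comp_mul hug hl
  calc ∫ x in Ioi 0, x * f x * g (l * x) ≤ ∫ x in Ioi 0, M * (x * g (l * x)) :=
        integral_mono_of_nonneg ((ae_restrict_iff' measurableSet_Ioi).2 (ae_of_all _ fun x hx =>
          by have := hf_pos x; have := hg_pos (l * x); have : 0 < x := hx; positivity))
          (hint.const_mul M) ((ae_restrict_iff' measurableSet_Ioi).2 (ae_of_all _ fun x hx =>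
          mul_mul_comp_mul_le hf_bdd hg_pos hx))
    _ = M * (∫ u in Ioi 0, u * g u) * (l ^ 2)⁻¹ := by
        rw [integral_const_mul, hval, mul_assoc]

lemma le_integral_mul_mul_comp_mul (hf_pos : ∀ x, 0 < f x)
    (hf_anti : AntitoneOn f (Ici 0)) (hg_pos : ∀ t, 0 < g t) (hg_anti : AntitoneOn g (Ici 0))
    (hint : IntegrableOn (fun x => x * f x * g (l * x)) (Ioi 0)) (hl : 1 ≤ l) :
    f 1 * g 1 / 4 * (l ^ 2)⁻¹ ≤ ∫ x in Ioi 0, x * f x * g (l * x) := by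
  have hl0 : 0 < l := one_pos.trans_le hl
  have h := mul_sub_le_setIntegral measurableSet_Ioi hint
    (fun x hx => by have := hf_pos x; have := hg_pos (l * x); have : 0 < x := hx; positivity)
    (inv_anti₀ (by positivity) (by linarith) : (2 * l)⁻¹ ≤ l⁻¹)
    (Ioc_subset_Ioi_self.trans (Ioi_subset_Ioi (by positivity)))
    (c := (2 * l)⁻¹ * (f 1 * g 1)) fun x hx => ?_
  · convert h using 1
    field_simp
    ring
  · have hx0 : 0 < x := lt_of_le_of_lt (by positivity) hx.1
    have hlx : l * x ≤ 1 := by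
      calc l * x ≤ l * l⁻¹ := mul_le_mul_of_nonneg_left hx.2 hl0.le
        _ = 1 := mul_inv_cancel₀ hl0.ne'
    calc (2 * l)⁻¹ * (f 1 * g 1) ≤ x * (f x * g (l * x)) :=
          mul_le_mul hx.1.le (mul_le_mul
            (hf_anti hx0.le (mem_Ici.2 zero_le_one) (hx.2.trans (inv_le_one_of_one_le₀ hl)))
            (hg_anti (mem_Ici.2 (by positivity)) (mem_Ici.2 zero_le_one) hlx)
            (hg_pos 1).le (hf_pos x).le) (by have := hf_pos 1; have := hg_pos 1; positivity)
            hx0.le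
      _ = x * f x * g (l * x) := (mul_assoc _ _ _).symm

lemma isTheta_integral_mul_mul_comp_mul (hf : AEStronglyMeasurable f)
    (hf_pos : ∀ x, 0 < f x) (hf_bdd : ∀ x, f x ≤ M) (hf_anti : AntitoneOn f (Ici 0))
    (hg_meas : Measurable g) (hg_pos : ∀ t, 0 < g t) (hg_anti : AntitoneOn g (Ici 0))
    (hug : IntegrableOn (fun u => u * g u) (Ioi 0)) :
    (fun l => ∫ x in Ioi 0, x * f x * g (l * x)) =Θ[atTop] fun l => l ^ (-2 : ℝ) := by
  have hrpow : ∀ l : ℝ, 0 < l → l ^ (-2 : ℝ) = (l ^ 2)⁻¹ := fun l hl => by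
    rw [Real.rpow_neg hl.le, Real.rpow_two]
  have hlo : ∀ᶠ l in atTop,
      f 1 * g 1 / 4 * l ^ (-2 : ℝ) ≤ ∫ x in Ioi 0, x * f x * g (l * x) := by
    filter_upwards [eventually_ge_atTop 1] with l hl
    rw [hrpow l (one_pos.trans_le hl)]
    exact le_integral_mul_mul_comp_mul hf_pos hf_anti hg_pos hg_anti
      (integrableOn_mul_mul_comp_mul hf_pos hf_bdd hg_pos hf hg_meas hug (one_pos.trans_le hl))
      hl
  have hhi : ∀ᶠ l in atTop,
      ∫ x in Ioi 0, x * f x * g (l * x) ≤ M * (∫ u in Ioi 0, u * g u) * l ^ (-2 : ℝ) := by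
    filter_upwards [eventually_gt_atTop 0] with l hl
    rw [hrpow l hl]
    exact integral_mul_mul_comp_mul_le hf_pos hf_bdd hg_pos hug hl
  exact isTheta_of_le_of_le (by have := hf_pos 1; have := hg_pos 1; positivity)
    ((eventually_gt_atTop 0).mono fun l hl => (Real.rpow_pos_of_pos hl _).le) hlo hhi

end FirstMoment

lemma gamma_ratio_pos {α β : ℝ} (hα : 0 < α) (hβ : 0 < β) :
    0 < Real.Gamma (α + β) / (Real.Gamma α * Real.Gamma β) :=
  div_pos (Real.Gamma_pos_of_pos (add_pos hα hβ))
    (mul_pos (Real.Gamma_pos_of_pos hα) (Real.Gamma_pos_of_pos hβ))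

section Prior

variable {f g G : ℝ → ℝ} {α β l : ℝ} (hf : Integrable f) (hf_one : ∫ x, f x = 1)
  (hg0 : ∀ t, 0 ≤ g t) (hg : Integrable g) (hg_one : ∫ t, g t = 1)
  (hg_even : ∀ t, g (-t) = g t) (hG : ∀ t, G t = ∫ u in Iic t, g u)
include hf hf_one hg0 hg hg_one hg_even hG

lemma btvPriorId_eq (hl : 0 < l) :
    btvPriorId f g G α β l = Real.Gamma (α + β) / (Real.Gamma α * Real.Gamma β) *
      (1 - mtvDefect f g l) ^ (α - 1) * mtvDefect f g l ^ (β - 1) *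
      (2 * ∫ x in Ioi 0, x * f x * g (l * x)) := by
  rw [btvPriorId, MTVid_eq_half_sub_mtvDefect hf hf_one hg0 hg hg_one hg_even hG hl,
    sub_sub_cancel, show 1 / 2 - mtvDefect f g l + 1 / 2 = 1 - mtvDefect f g l by ring]

lemma btvPriorId_nonneg (hf_pos : ∀ x, 0 < f x) (hα : 0 < α) (hβ : 0 < β) (hl : 0 < l) :
    0 ≤ btvPriorId f g G α β l := by
  have hD := mtvDefect_nonneg (fun x => (hf_pos x).le) hg0 l
  have hD_half := mtvDefect_le_half hf hf_pos hf_one hg0 hg hg_one hg_even hl.le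
  have hA : 0 ≤ ∫ x in Ioi 0, x * f x * g (l * x) :=
    setIntegral_nonneg measurableSet_Ioi fun x (hx : 0 < x) =>
      mul_nonneg (mul_nonneg hx.le (hf_pos x).le) (hg0 _)
  rw [btvPriorId_eq hf hf_one hg0 hg hg_one hg_even hG hl]
  exact mul_nonneg (mul_nonneg (mul_nonneg (gamma_ratio_pos hα hβ).le
    (Real.rpow_nonneg (by linarith) _)) (Real.rpow_nonneg hD _)) (mul_nonneg two_pos.le hA)

end Prior

theorem BTV_alpha_beta_right_tail_order_general
    (f g G : ℝ → ℝ) (M : ℝ)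
    (hf_pos : ∀ x, 0 < f x)
    (hf_int : Integrable f) (hf_one : ∫ x, f x = 1)
    (hf_even : ∀ x, f (-x) = f x)
    (hf_bdd : ∀ x, f x ≤ M)
    (hf_anti : AntitoneOn f (Set.Ici 0))
    (hg_meas : Measurable g) (hg_pos : ∀ t, 0 < g t)
    (hg_int : Integrable g) (hg_one : ∫ t, g t = 1)
    (hg_even : ∀ t, g (-t) = g t)
    (hg_anti : AntitoneOn g (Set.Ici 0))
    (hug_int : IntegrableOn (fun u => u * g u) (Set.Ioi 0))
    (hG : ∀ t, G t = ∫ u in Set.Iic t, g u)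
    (α β : ℝ) (hα : 0 < α) (hβ : 0 < β) :
    ∃ c C Λ : ℝ, 0 < c ∧ c ≤ C ∧ 0 < Λ ∧
      ∀ l : ℝ, Λ ≤ l →
        c * l ^ (-β - 1) ≤ btvPriorId f g G α β l ∧
        btvPriorId f g G α β l ≤ C * l ^ (-β - 1) := by
  have hg0 : ∀ t, 0 ≤ g t := fun t => (hg_pos t).le
  have hpos : ∀ᶠ l : ℝ in atTop, 0 < l := eventually_gt_atTop 0
  have hprior : btvPriorId f g G α β =ᶠ[atTop] _ :=
    hpos.mono fun l hl => btvPriorId_eq hf_int hf_one hg0 hg_int hg_one hg_even hG hl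
  have hΘ := hprior.trans_isTheta <| isTheta_betaPrior_shape (gamma_ratio_pos hα hβ).ne'
    (mtvDefect_isTheta hf_int hf_pos hf_even hf_bdd hf_anti hg_meas hg_pos hg_int hug_int)
    (mtvDefect_nonneg (fun x => (hf_pos x).le) hg0)
    (isTheta_integral_mul_mul_comp_mul hf_int.aestronglyMeasurable hf_pos hf_bdd hf_anti
      hg_meas hg_pos hg_anti hug_int)
  exact exists_le_of_isTheta_atTop hΘ
    (hpos.mono fun l hl =>
      btvPriorId_nonneg hf_int hf_one hg0 hg_int hg_one hg_even hG hf_pos hα hβ hl)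
    (hpos.mono fun l hl => (Real.rpow_pos_of_pos hl _).le)

/-- Corollary, tail order: under the stated conditions, the
right tail of the BTV(α,β) prior is of exact order λ^{−β−1}. -/
theorem BTV_alpha_beta_right_tail_order
    (f g G : ℝ → ℝ) (M : ℝ)
    (hf_meas : Measurable f) (hf_nonneg : ∀ x, 0 ≤ f x)
    (hf_pos : ∀ x, 0 < f x)
    (hf_int : Integrable f) (hf_one : ∫ x, f x = 1)
    (hf_even : ∀ x, f (-x) = f x)
    (hM : f 0 = M) (hf_bdd : ∀ x, f x ≤ M)
    (hf_anti : AntitoneOn f (Set.Ici 0))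
    (hg_meas : Measurable g) (hg_pos : ∀ t, 0 < g t)
    (hg_int : Integrable g) (hg_one : ∫ t, g t = 1)
    (hg_even : ∀ t, g (-t) = g t)
    (hg_bdd : ∃ C : ℝ, ∀ t, g t ≤ C)
    (hg_anti : AntitoneOn g (Set.Ici 0))
    (hug_int : IntegrableOn (fun u => u * g u) (Set.Ioi 0))
    (hG : ∀ t, G t = ∫ u in Set.Iic t, g u)
    (α β : ℝ) (hα : 0 < α) (hβ : 0 < β) :
    ∃ c C Λ : ℝ, 0 < c ∧ c ≤ C ∧ 0 < Λ ∧
      ∀ l : ℝ, Λ ≤ l →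
        c * l ^ (-β - 1) ≤ btvPriorId f g G α β l ∧
        btvPriorId f g G α β l ≤ C * l ^ (-β - 1) :=
  BTV_alpha_beta_right_tail_order_general f g G M hf_pos hf_int hf_one hf_even hf_bdd hf_anti
    hg_meas hg_pos hg_int hg_one hg_even hg_anti hug_int hG α β hα hβ
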